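/- arXiv:0902.3078 — 3 statements merged into one kernel-verified Lean document; each statement's English description precedes it below -/
import Mathlib

section
/- Let x : (0, ∞) → [0, ∞) be a decreasing, right-continuous, integrable function with ∫₀^∞ x = 1, ν_x the measure with density x, and λ Lebesgue measure on (0, ∞). For a measurable function f on (0, ∞), let μ̃_t(f, m) = inf{‖f·χ_E‖_∞ : m(Eᶜ) ≤ t} denote the decreasing rearrangement with respect to the measure m. Then for every t > 0, μ̃_t(f, λ) ≥ μ̃_{F(t)}(f, ν_x), where F(t) = ∫₀^t x(s) ds. -/
open MeasureTheory
open scoped ENNReal NNReal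

/-- Decreasing rearrangement with respect to a measure `m`:
`μ̃_t(f, m) = inf {‖f·χ_E‖_∞ : m(Eᶜ) ≤ t}`. -/
noncomputable def rearr (m : MeasureTheory.Measure ℝ) (f : ℝ → ℝ≥0∞) (t : ℝ≥0∞) : ℝ≥0∞ :=
  ⨅ (E : Set ℝ) (_ : MeasurableSet E) (_ : m Eᶜ ≤ t), essSup (E.indicator f) m

/-!
A set `E` admissible for `μ̃_t(f, λ)`, i.e. with `λ(Eᶜ) ≤ t`, is also admissible for
`μ̃_{F(t)}(f, ν_x)`: among sets of Lebesgue measure at most `t`, the initial segment `(0, t]`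
carries the most `ν_x`-mass because the density `x` is decreasing (bathtub principle). Since
`ν_x ≪ λ`, the `ν_x`-essential supremum of `f·χ_E` is at most its Lebesgue one.
-/

open Set

theorem MeasureTheory.measure_sdiff_le_measure_sdiff_of_le {α : Type*} [MeasurableSpace α]
    {μ : Measure α} {s t : Set α} (hs : MeasurableSet s) (ht : MeasurableSet t)
    (hst : μ s ≤ μ t) (hfin : μ (s ∩ t) ≠ ∞) : μ (s \ t) ≤ μ (t \ s) := by
  rw [← measure_inter_add_sdiff s ht, ← measure_inter_add_sdiff t hs, inter_comm t s] at hst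
  exact (ENNReal.add_le_add_iff_left hfin).1 hst

section Bathtub

variable {α : Type*} [LinearOrder α] [TopologicalSpace α] [OrderClosedTopology α]
  [MeasurableSpace α] [OpensMeasurableSpace α] {μ : Measure α}

/-- Moving the part of `A` beyond `b` into the gaps of `A` in `(a, b]` can only increase the
integral of a decreasing function, since values are compared with the pivot `g b`. -/
theorem lintegral_le_lintegral_Ioc_of_antitoneOn {g : α → ℝ≥0∞} {a b : α} (hab : a < b)
    (hg : AntitoneOn g (Ioi a)) {A : Set α} (hA : MeasurableSet A) (hAa : A ⊆ Ioi a)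
    (hvol : μ A ≤ μ (Ioc a b)) (hfin : μ (Ioc a b) ≠ ∞) :
    ∫⁻ s in A, g s ∂μ ≤ ∫⁻ s in Ioc a b, g s ∂μ := by
  have hmass : μ (A \ Ioc a b) ≤ μ (Ioc a b \ A) :=
    measure_sdiff_le_measure_sdiff_of_le hA measurableSet_Ioc hvol
      (measure_ne_top_of_subset inter_subset_right hfin)
  have hbeyond : ∀ s ∈ A \ Ioc a b, g s ≤ g b := fun s hs =>
    hg hab (hAa hs.1) (le_of_lt (not_le.1 fun hsb => hs.2 ⟨hAa hs.1, hsb⟩))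
  have hgap : ∀ s ∈ Ioc a b \ A, g b ≤ g s := fun s hs => hg hs.1.1 hab hs.1.2
  calc ∫⁻ s in A, g s ∂μ
      = ∫⁻ s in A ∩ Ioc a b, g s ∂μ + ∫⁻ s in A \ Ioc a b, g s ∂μ :=
        (lintegral_inter_add_sdiff _ _ measurableSet_Ioc).symm
    _ ≤ ∫⁻ s in A ∩ Ioc a b, g s ∂μ + g b * μ (A \ Ioc a b) := by
        gcongr
        rw [← setLIntegral_const]
        exact setLIntegral_mono' (hA.diff measurableSet_Ioc) hbeyond
    _ ≤ ∫⁻ s in A ∩ Ioc a b, g s ∂μ + g b * μ (Ioc a b \ A) := by gcongr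
    _ ≤ ∫⁻ s in A ∩ Ioc a b, g s ∂μ + ∫⁻ s in Ioc a b \ A, g s ∂μ := by
        gcongr
        rw [← setLIntegral_const]
        exact setLIntegral_mono' (measurableSet_Ioc.diff hA) hgap
    _ = ∫⁻ s in Ioc a b, g s ∂μ := by
        rw [inter_comm, lintegral_inter_add_sdiff _ _ hA]

end Bathtub

theorem withDensity_restrict_Ioi_apply_le_lintegral_Ioc {g : ℝ → ℝ≥0∞} {a b : ℝ} (hab : a < b)
    (hg : AntitoneOn g (Ioi a)) {B : Set ℝ} (hB : MeasurableSet B)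
    (hvol : volume.restrict (Ioi a) B ≤ ENNReal.ofReal (b - a)) :
    (volume.restrict (Ioi a)).withDensity g B ≤ ∫⁻ s in Ioc a b, g s := by
  rw [Measure.restrict_apply hB] at hvol
  rw [withDensity_apply _ hB, Measure.restrict_restrict hB]
  exact lintegral_le_lintegral_Ioc_of_antitoneOn hab hg (hB.inter measurableSet_Ioi)
    inter_subset_right (by rwa [Real.volume_Ioc]) measure_Ioc_lt_top.ne

theorem rearr_le_rearr_of_absolutelyContinuous {μ ν : Measure ℝ} (hνμ : ν ≪ μ) (f : ℝ → ℝ≥0∞)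
    {s t : ℝ≥0∞} (hadm : ∀ E, MeasurableSet E → μ Eᶜ ≤ t → ν Eᶜ ≤ s) :
    rearr ν f s ≤ rearr μ f t :=
  le_iInf₂ fun E hE => le_iInf fun hEt =>
    (iInf₂_le_of_le E hE (iInf_le _ (hadm E hE hEt))).trans (essSup_mono_measure hνμ)

theorem rearrangement_comparison_general (x : ℝ → ℝ)
    (hpos : ∀ t : ℝ, 0 < t → 0 ≤ x t)
    (hdec : AntitoneOn x (Set.Ioi 0))
    (hint : MeasureTheory.IntegrableOn x (Set.Ioi 0))
    (f : ℝ → ℝ≥0∞) :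
    ∀ t : ℝ, 0 < t →
      rearr ((MeasureTheory.volume.restrict (Set.Ioi (0:ℝ))).withDensity
          (fun s => ENNReal.ofReal (x s))) f
        (ENNReal.ofReal (∫ s in Set.Ioc (0:ℝ) t, x s)) ≤
      rearr (MeasureTheory.volume.restrict (Set.Ioi (0:ℝ))) f (ENNReal.ofReal t) := by
  intro t ht
  have hF : ENNReal.ofReal (∫ s in Ioc 0 t, x s) = ∫⁻ s in Ioc 0 t, ENNReal.ofReal (x s) :=
    ofReal_integral_eq_lintegral_ofReal (hint.mono_set Ioc_subset_Ioi_self)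
      ((ae_restrict_iff' measurableSet_Ioc).2 (ae_of_all _ fun s hs => hpos s hs.1))
  refine rearr_le_rearr_of_absolutelyContinuous (withDensity_absolutelyContinuous _ _) f
    fun E hE hEt => ?_
  rw [hF]
  exact withDensity_restrict_Ioi_apply_le_lintegral_Ioc ht
    (ENNReal.ofReal_mono.comp_antitoneOn hdec) hE.compl (by rwa [sub_zero])

/-- For decreasing, right-continuous, integrable x ≥ 0 with ∫₀^∞ x = 1, and any
measurable f, the Lebesgue rearrangement dominates: μ̃_t(f, λ) ≥ μ̃_{F(t)}(f, ν_x). -/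
theorem rearrangement_comparison (x : ℝ → ℝ)
    (hpos : ∀ t : ℝ, 0 < t → 0 ≤ x t)
    (hdec : AntitoneOn x (Set.Ioi 0))
    (hrc : ∀ t : ℝ, 0 < t → ContinuousWithinAt x (Set.Ici t) t)
    (hint : MeasureTheory.IntegrableOn x (Set.Ioi 0))
    (hone : ∫ t in Set.Ioi (0:ℝ), x t = 1)
    (f : ℝ → ℝ≥0∞) (hf : Measurable f) :
    ∀ t : ℝ, 0 < t →
      rearr ((MeasureTheory.volume.restrict (Set.Ioi (0:ℝ))).withDensity
          (fun s => ENNReal.ofReal (x s))) f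
        (ENNReal.ofReal (∫ s in Set.Ioc (0:ℝ) t, x s)) ≤
      rearr (MeasureTheory.volume.restrict (Set.Ioi (0:ℝ))) f (ENNReal.ofReal t) :=
  rearrangement_comparison_general x hpos hdec hint f
end

section
/- Let x : (0, ∞) → [0, ∞) be decreasing, right-continuous, integrable with ∫₀^∞ x = 1 and t_x = inf{t : x(t) = 0}, and let h : [0, ∞) → [0, ∞] be decreasing, right-continuous, and finite on (0, ∞). Then for all 0 < t < t_x, h(t) = μ̃_t(h, λ) = μ̃_{F(t)}(h, ν_x), where F(t) = ∫₀^t x(s) ds, λ is Lebesgue measure, ν_x has density x, and μ̃_t(h, m) = inf{‖h·χ_E‖_∞ : m(Eᶜ) ≤ t}. -/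
/-!
For decreasing `h`, the set `Ioi t` is admissible in the infimum defining `μ̃_c(h, m)` as soon as
`m (Iic t) ≤ c`, giving `μ̃_c(h, m) ≤ h t`. Conversely, if `c < m (Ioc 0 t)` then every admissible
`E` meets `Ioc 0 t` in positive measure, where `h ≥ h t`, so `h t ≤ μ̃_c(h, m)`. For the measures
`m = ν|_(0,∞)` and `c = ν (0, t]` the two bounds meet at `t` by right-continuity of `h`, provided
`ν (0, ·]` increases strictly to the right of `t`. For Lebesgue measure this is clear, and for
`ν_x` it holds because `x > 0` on `(0, t_x)`.
-/

open MeasureTheory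
open scoped ENNReal NNReal

open Set Filter Topology

section Rearrangement

variable {h : ℝ → ℝ≥0∞} {m : Measure ℝ} {c : ℝ≥0∞} {t : ℝ}

theorem rearr_le_of_measure_Iic_le (hh : AntitoneOn h (Ici 0)) (ht : 0 ≤ t)
    (hc : m (Iic t) ≤ c) : rearr m h c ≤ h t := by
  refine iInf₂_le_of_le (Ioi t) measurableSet_Ioi (iInf_le_of_le (by rwa [compl_Ioi]) ?_)
  refine essSup_le_of_ae_le _ (Eventually.of_forall fun s => ?_)
  by_cases hs : s ∈ Ioi t
  · rw [indicator_of_mem hs]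
    exact hh ht (ht.trans hs.le) hs.le
  · rw [indicator_of_notMem hs]
    exact zero_le

theorem le_rearr_of_lt_measure_Ioc (hh : AntitoneOn h (Ici 0)) (ht : 0 ≤ t)
    (hc : c < m (Ioc 0 t)) : h t ≤ rearr m h c := by
  refine le_iInf₂ fun E _ => le_iInf fun hEc => ?_
  by_contra! hlt
  have hnull : m (Ioc 0 t ∩ E) = 0 := by
    refine measure_mono_null ?_ (ae_iff.mp (ae_lt_of_essSup_lt hlt))
    rintro s ⟨hs, hsE⟩
    simpa only [mem_ofPred_eq, not_lt, indicator_of_mem hsE] using hh hs.1.le ht hs.2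
  have : m (Ioc 0 t) ≤ c := calc
    m (Ioc 0 t) ≤ m (Ioc 0 t ∩ E) + m (Ioc 0 t \ E) := measure_le_inter_add_sdiff m _ E
    _ ≤ m Eᶜ := by rw [hnull, zero_add]; exact measure_mono (sdiff_subset_compl _ _)
    _ ≤ c := hEc
  exact this.not_gt hc

theorem le_rearr_of_eventually_lt_measure_Ioc (hh : AntitoneOn h (Ici 0)) (ht : 0 ≤ t)
    (hrc : ContinuousWithinAt h (Ici t) t) (hc : ∀ᶠ t' in 𝓝[>] t, c < m (Ioc 0 t')) :
    h t ≤ rearr m h c := by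
  refine le_of_tendsto (hrc.mono_left (nhdsWithin_mono _ Ioi_subset_Ici_self)) ?_
  filter_upwards [hc, self_mem_nhdsWithin] with t' hct' ht'
  exact le_rearr_of_lt_measure_Ioc hh (ht.trans (le_of_lt ht')) hct'

theorem rearr_restrict_Ioi_measure_Ioc (ν : Measure ℝ) (hh : AntitoneOn h (Ici 0)) (ht : 0 ≤ t)
    (hrc : ContinuousWithinAt h (Ici t) t)
    (hν : ∀ᶠ t' in 𝓝[>] t, ν (Ioc 0 t) < ν (Ioc 0 t')) :
    rearr (ν.restrict (Ioi 0)) h (ν (Ioc 0 t)) = h t := by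
  have hIic : ν.restrict (Ioi 0) (Iic t) = ν (Ioc 0 t) := by
    rw [Measure.restrict_apply measurableSet_Iic, Iic_inter_Ioi]
  have hIoc (t' : ℝ) : ν.restrict (Ioi 0) (Ioc 0 t') = ν (Ioc 0 t') := by
    rw [Measure.restrict_apply measurableSet_Ioc, inter_eq_left.mpr Ioc_subset_Ioi_self]
  refine le_antisymm (rearr_le_of_measure_Iic_le hh ht hIic.le) ?_
  exact le_rearr_of_eventually_lt_measure_Ioc hh ht hrc (by simpa only [hIoc] using hν)

end Rearrangement

theorem measure_Ioc_lt_measure_Ioc {ν : Measure ℝ} {a b c : ℝ} (hab : a ≤ b) (hbc : b ≤ c)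
    (hfin : ν (Ioc a b) ≠ ∞) (hpos : 0 < ν (Ioc b c)) : ν (Ioc a b) < ν (Ioc a c) := by
  rw [← Ioc_union_Ioc_eq_Ioc hab hbc,
    measure_union (Ioc_disjoint_Ioc_of_le le_rfl) measurableSet_Ioc]
  exact ENNReal.lt_add_right hfin hpos.ne'

theorem withDensity_ofReal_apply_Ioc {μ : Measure ℝ} {x : ℝ → ℝ} {a b : ℝ}
    (hint : IntegrableOn x (Ioc a b) μ) (hpos : ∀ s ∈ Ioc a b, 0 ≤ x s) :
    μ.withDensity (fun s => ENNReal.ofReal (x s)) (Ioc a b) =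
      ENNReal.ofReal (∫ s in Ioc a b, x s ∂μ) := by
  rw [withDensity_apply _ measurableSet_Ioc, ofReal_integral_eq_lintegral_ofReal hint]
  filter_upwards [ae_restrict_mem measurableSet_Ioc] with s hs using hpos s hs

theorem withDensity_ofReal_Ioc_pos {x : ℝ → ℝ} {t t' : ℝ} (hdec : AntitoneOn x (Ioi 0))
    (ht : 0 < t) (htt' : t < t') (hx : 0 < x t') :
    0 < volume.withDensity (fun s => ENNReal.ofReal (x s)) (Ioc t t') := by
  rw [withDensity_apply _ measurableSet_Ioc]
  calc (0 : ℝ≥0∞) < ENNReal.ofReal (x t') * volume (Ioc t t') := by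
        rw [Real.volume_Ioc]
        exact ENNReal.mul_pos (ENNReal.ofReal_pos.mpr hx).ne'
          (ENNReal.ofReal_pos.mpr (sub_pos.mpr htt')).ne'
    _ = ∫⁻ _ in Ioc t t', ENNReal.ofReal (x t') := (setLIntegral_const _ _).symm
    _ ≤ ∫⁻ s in Ioc t t', ENNReal.ofReal (x s) := setLIntegral_mono' measurableSet_Ioc
        fun s hs => ENNReal.ofReal_le_ofReal (hdec (ht.trans hs.1) (ht.trans htt') hs.2)

theorem eventually_pos_of_lt_sInf_zeros {x : ℝ → ℝ} {t : ℝ} (hpos : ∀ s : ℝ, 0 < s → 0 ≤ x s)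
    (hdec : AntitoneOn x (Ioi 0)) (ht : 0 < t)
    (htx : ENNReal.ofReal t < sInf {s : ℝ≥0∞ | ∃ r : ℝ, 0 < r ∧ x r = 0 ∧ s = ENNReal.ofReal r}) :
    ∀ᶠ t' in 𝓝[>] t, 0 < x t' := by
  obtain ⟨u, -, htu, hux⟩ := ENNReal.lt_iff_exists_real_btwn.mp htx
  have hu : 0 < u := ENNReal.ofReal_pos.mp ((ENNReal.ofReal_pos.mpr ht).trans htu)
  have hxu : 0 < x u := (hpos u hu).lt_of_ne fun hzero =>
    hux.not_ge (sInf_le ⟨u, hu, hzero.symm, rfl⟩)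
  filter_upwards [Ioc_mem_nhdsGT ((ENNReal.ofReal_lt_ofReal_iff hu).mp htu)] with t' ht'
  exact hxu.trans_le (hdec (ht.trans ht'.1) hu ht'.2)

theorem rearrangement_of_decreasing_general (x : ℝ → ℝ)
    (hpos : ∀ t : ℝ, 0 < t → 0 ≤ x t)
    (hdec : AntitoneOn x (Set.Ioi 0))
    (hint : MeasureTheory.IntegrableOn x (Set.Ioi 0))
    (h : ℝ → ℝ≥0∞)
    (hhdec : AntitoneOn h (Set.Ici 0))
    (hhrc : ∀ t : ℝ, 0 ≤ t → ContinuousWithinAt h (Set.Ici t) t) :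
    ∀ t : ℝ, 0 < t →
      ENNReal.ofReal t <
        sInf {s : ℝ≥0∞ | ∃ r : ℝ, 0 < r ∧ x r = 0 ∧ s = ENNReal.ofReal r} →
      h t = rearr (MeasureTheory.volume.restrict (Set.Ioi (0:ℝ))) h (ENNReal.ofReal t) ∧
      rearr (MeasureTheory.volume.restrict (Set.Ioi (0:ℝ))) h (ENNReal.ofReal t) =
        rearr ((MeasureTheory.volume.restrict (Set.Ioi (0:ℝ))).withDensity
            (fun s => ENNReal.ofReal (x s))) h
          (ENNReal.ofReal (∫ s in Set.Ioc (0:ℝ) t, x s)) := by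
  intro t ht htx
  set ν := volume.withDensity (fun s => ENNReal.ofReal (x s))
  have hνIoc : ν (Ioc 0 t) = ENNReal.ofReal (∫ s in Ioc 0 t, x s) :=
    withDensity_ofReal_apply_Ioc (hint.mono_set Ioc_subset_Ioi_self) fun s hs => hpos s hs.1
  have hlebesgue : rearr (volume.restrict (Ioi 0)) h (ENNReal.ofReal t) = h t := by
    have hlt : ∀ᶠ t' in 𝓝[>] t, volume (Ioc 0 t) < volume (Ioc 0 t') := by
      filter_upwards [self_mem_nhdsWithin] with t' ht'
      simpa [Real.volume_Ioc] using (ENNReal.ofReal_lt_ofReal_iff (ht.trans ht')).mpr ht'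
    simpa [Real.volume_Ioc] using
      rearr_restrict_Ioi_measure_Ioc volume hhdec ht.le (hhrc t ht.le) hlt
  have hdensity : rearr ((volume.restrict (Ioi 0)).withDensity fun s => ENNReal.ofReal (x s)) h
      (ENNReal.ofReal (∫ s in Ioc 0 t, x s)) = h t := by
    rw [← restrict_withDensity measurableSet_Ioi, ← hνIoc]
    refine rearr_restrict_Ioi_measure_Ioc ν hhdec ht.le (hhrc t ht.le) ?_
    filter_upwards [eventually_pos_of_lt_sInf_zeros hpos hdec ht htx, self_mem_nhdsWithin]
      with t' hxt' ht'
    exact measure_Ioc_lt_measure_Ioc ht.le (le_of_lt ht') (hνIoc ▸ ENNReal.ofReal_ne_top)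
      (withDensity_ofReal_Ioc_pos hdec ht ht' hxt')
  exact ⟨hlebesgue.symm, hlebesgue.trans hdensity.symm⟩

/-- For decreasing, right-continuous h finite on (0,∞), and x as before, for
0 < t < t_x: h(t) = μ̃_t(h, λ) = μ̃_{F(t)}(h, ν_x). -/
theorem rearrangement_of_decreasing (x : ℝ → ℝ)
    (hpos : ∀ t : ℝ, 0 < t → 0 ≤ x t)
    (hdec : AntitoneOn x (Set.Ioi 0))
    (hrc : ∀ t : ℝ, 0 < t → ContinuousWithinAt x (Set.Ici t) t)
    (hint : MeasureTheory.IntegrableOn x (Set.Ioi 0))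
    (hone : ∫ t in Set.Ioi (0:ℝ), x t = 1)
    (h : ℝ → ℝ≥0∞)
    (hhdec : AntitoneOn h (Set.Ici 0))
    (hhrc : ∀ t : ℝ, 0 ≤ t → ContinuousWithinAt h (Set.Ici t) t)
    (hhfin : ∀ t : ℝ, 0 < t → h t ≠ ⊤) :
    ∀ t : ℝ, 0 < t →
      ENNReal.ofReal t <
        sInf {s : ℝ≥0∞ | ∃ r : ℝ, 0 < r ∧ x r = 0 ∧ s = ENNReal.ofReal r} →
      h t = rearr (MeasureTheory.volume.restrict (Set.Ioi (0:ℝ))) h (ENNReal.ofReal t) ∧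
      rearr (MeasureTheory.volume.restrict (Set.Ioi (0:ℝ))) h (ENNReal.ofReal t) =
        rearr ((MeasureTheory.volume.restrict (Set.Ioi (0:ℝ))).withDensity
            (fun s => ENNReal.ofReal (x s))) h
          (ENNReal.ofReal (∫ s in Set.Ioc (0:ℝ) t, x s)) :=
  rearrangement_of_decreasing_general x hpos hdec hint h hhdec hhrc
end

section
/- Let h : [0, ∞) → [0, ∞] be a decreasing, right-continuous function and let t > 0. Then inf{‖h·χ_E‖_∞ : E ⊆ [0,∞) measurable, λ(Eᶜ) ≤ t} = h(t), where λ is Lebesgue measure and ‖·‖_∞ is the λ-essential supremum. -/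
/-! Taking `E = [t, ∞)` gives `≤ h t`, as `h ≤ h t` there. Conversely, for `s > t` the interval
`[0, s]` is longer than `Eᶜ`, so `E` meets it in positive measure, and on that set `h · χ_E ≥ h s`;
hence the essential supremum is at least `h s`, and right-continuity lets `s` decrease to `t`. -/

open MeasureTheory Set
open scoped ENNReal

lemma le_essSup_of_forall_mem_le {α β : Type*} [MeasurableSpace α] [CompleteLinearOrder β]
    {μ : Measure α} {f : α → β} {A : Set α} {c : β} (hA : μ A ≠ 0) (hf : ∀ x ∈ A, c ≤ f x) :
    c ≤ essSup f μ := by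
  by_contra! hlt
  exact hA <| measure_mono_null (fun x hx => not_lt.2 (hf x hx))
    (ae_iff.1 (ae_lt_of_essSup_lt hlt))

lemma measure_inter_ne_zero_of_measure_compl_lt {α : Type*} [MeasurableSpace α]
    {μ : Measure α} {E A : Set α} (h : μ Eᶜ < μ A) : μ (E ∩ A) ≠ 0 := by
  intro hzero
  refine (h.trans_le' ?_).false
  calc μ A ≤ μ (E ∩ A ∪ Eᶜ) := measure_mono fun x hx => (em (x ∈ E)).imp (⟨·, hx⟩) id
    _ ≤ μ (E ∩ A) + μ Eᶜ := measure_union_le _ _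
    _ = μ Eᶜ := by rw [hzero, zero_add]

lemma ContinuousWithinAt.le_of_forall_gt_le {α β : Type*} [TopologicalSpace α] [LinearOrder α]
    [OrderTopology α] [DenselyOrdered α] [NoMaxOrder α] [TopologicalSpace β] [Preorder β]
    [OrderClosedTopology β] {f : α → β} {t : α} {c : β} (hf : ContinuousWithinAt f (Ici t) t)
    (hle : ∀ s, t < s → f s ≤ c) : f t ≤ c :=
  le_of_tendsto ((hf.mono Ioi_subset_Ici_self).tendsto) (eventually_nhdsWithin_of_forall hle)

lemma volume_restrict_Ici_zero_Icc {s : ℝ} :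
    volume.restrict (Ici 0) (Icc 0 s) = ENNReal.ofReal s := by
  rw [Measure.restrict_apply measurableSet_Icc, inter_eq_left.2 Icc_subset_Ici_self,
    Real.volume_Icc, sub_zero]

lemma volume_restrict_Ici_zero_compl_Ici {t : ℝ} :
    volume.restrict (Ici 0) (Ici t)ᶜ = ENNReal.ofReal t := by
  rw [compl_Ici, Measure.restrict_apply measurableSet_Iio, Iio_inter_Ici, Real.volume_Ico, sub_zero]

lemma AntitoneOn.indicator_Ici_le {h : ℝ → ℝ≥0∞} {a t : ℝ} (hdec : AntitoneOn h (Ici a))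
    (hat : a ≤ t) (x : ℝ) : (Ici t).indicator h x ≤ h t := by
  by_cases hx : x ∈ Ici t
  · rw [indicator_of_mem hx]
    exact hdec hat (hat.trans hx) hx
  · rw [indicator_of_notMem hx]
    exact zero_le

/-- For decreasing, right-continuous h : [0,∞) → [0,∞] and t > 0:
inf {‖h·χ_E‖_∞ : λ(Eᶜ) ≤ t} = h(t). -/
theorem rearrangement_eq_self (h : ℝ → ℝ≥0∞)
    (hdec : AntitoneOn h (Set.Ici 0))
    (hrc : ∀ t : ℝ, 0 ≤ t → ContinuousWithinAt h (Set.Ici t) t) :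
    ∀ t : ℝ, 0 < t →
      (⨅ (E : Set ℝ) (_ : MeasurableSet E)
        (_ : (MeasureTheory.volume.restrict (Set.Ici (0:ℝ))) Eᶜ ≤ ENNReal.ofReal t),
        essSup (E.indicator h) (MeasureTheory.volume.restrict (Set.Ici (0:ℝ)))) = h t := by
  intro t ht
  apply le_antisymm
  · refine iInf_le_of_le (Ici t) <| iInf_le_of_le measurableSet_Ici <|
      iInf_le_of_le volume_restrict_Ici_zero_compl_Ici.le ?_
    exact essSup_le_of_ae_le _ (ae_of_all _ (hdec.indicator_Ici_le ht.le))
  · refine le_iInf₂ fun E _ => le_iInf fun hEc => (hrc t ht.le).le_of_forall_gt_le fun s hts => ?_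
    have hpos : volume.restrict (Ici 0) (E ∩ Icc 0 s) ≠ 0 := by
      refine measure_inter_ne_zero_of_measure_compl_lt (hEc.trans_lt ?_)
      rw [volume_restrict_Ici_zero_Icc]
      exact (ENNReal.ofReal_lt_ofReal_iff (ht.trans hts)).2 hts
    refine le_essSup_of_forall_mem_le hpos ?_
    rintro x ⟨hxE, hx0, hxs⟩
    rw [indicator_of_mem hxE]
    exact hdec hx0 (hx0.trans hxs) hxs
end
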